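/- The class of almost periodic sequences is closed under finite automaton mappings: if F is a finite automaton and ω is almost periodic, then F(ω) is almost periodic. -/

import Mathlib

/-!
Let `w₀` be a recurrent factor of `ω` whose run map `s ↦ run(s, w₀)` has the smallest image
`D`. If a late recurrent word `w₀ u` also ends with `w₀`, reading `u` maps `D` onto itself: the
image of `w₀ u` lies in `D` and cannot be smaller. Chaining such words, reading `ω` from a late
occurrence `e` of `w₀` to any later one maps `D` onto `D`, so the image of the run map of
`ω[e, e + t + k)` depends only on the window `ω[e + t, e + t + k)`, `k` being a gap bound
for `w₀`.

Consequently every late factor of `t ↦ (ω(e + t), run map of ω[e, e + t))` arises from a word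
of a fixed uniformly recurrent language `L` of recurrent factors by precomposing all run maps
with one `ρ : q → q`. There are finitely many such translates of `L`, and two of them sharing
arbitrarily long words coincide, so all late factors lie in a single translate. The output of
the automaton is a letter-to-letter image of this sequence, and a sequence whose late factors
all lie in one uniformly recurrent language is almost periodic.
-/

/-- The factor of `ω` starting at `i` of length `n`. -/
def seg {α : Type*} (ω : ℕ → α) (i n : ℕ) : List α :=
  (List.range n).map (fun k => ω (i + k))

/-- `x` occurs in `ω` at position `i`. -/
def OccursAt {α : Type*} (ω : ℕ → α) (x : List α) (i : ℕ) : Prop :=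
  seg ω i x.length = x

/-- Strongly almost periodic: every factor occurs in every sufficiently long factor. -/
def SAP {α : Type*} (ω : ℕ → α) : Prop :=
  ∀ x : List α, (∃ i, OccursAt ω x i) →
    ∃ l, ∀ j, ∃ i, j ≤ i ∧ i + x.length ≤ j + l ∧ OccursAt ω x i

/-- Almost periodic: every factor occurring infinitely often occurs in every
sufficiently long factor. -/
def AP {α : Type*} (ω : ℕ → α) : Prop :=
  ∀ x : List α, {i | OccursAt ω x i}.Infinite →
    ∃ l, ∀ j, ∃ i, j ≤ i ∧ i + x.length ≤ j + l ∧ OccursAt ω x i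

/-- Eventually strongly almost periodic: some suffix is strongly almost periodic. -/
def EAP {α : Type*} (ω : ℕ → α) : Prop :=
  ∃ n, SAP (fun i => ω (n + i))

/-- The state sequence of a finite automaton with transition `f` and initial state `q0`
running on input `ω`. -/
def autoStates {σ δ q : Type*} (f : q → σ → q × δ) (q0 : q) (ω : ℕ → σ) : ℕ → q
  | 0 => q0
  | n + 1 => (f (autoStates f q0 ω n) (ω n)).1

/-- The output sequence `F(ω)` of a finite automaton. -/
def autoOutput {σ δ q : Type*} (f : q → σ → q × δ) (q0 : q) (ω : ℕ → σ) (n : ℕ) : δ :=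
  (f (autoStates f q0 ω n) (ω n)).2

open Filter

section Factors

variable {α β : Type*} (τ : ℕ → α)

@[simp] theorem seg_length (i n : ℕ) : (seg τ i n).length = n := by
  simp [seg]

theorem seg_add (i m n : ℕ) : seg τ i (m + n) = seg τ i m ++ seg τ (i + m) n := by
  simp only [seg, List.range_add, List.map_append, List.map_map]
  congr 1
  exact List.map_congr_left fun k _ => by simp [Nat.add_assoc]

theorem seg_comp (g : α → β) (i n : ℕ) : seg (g ∘ τ) i n = (seg τ i n).map g := by
  simp [seg]

theorem seg_eq_seg_iff {τ' : ℕ → α} {i j n : ℕ} :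
    seg τ i n = seg τ' j n ↔ ∀ k < n, τ (i + k) = τ' (j + k) := by
  simp [seg, List.map_inj_left]

theorem seg_eq_seg_of_seg_eq {τ' : ℕ → α} {i j o n m : ℕ} (h : seg τ i m = seg τ' j m)
    (hle : o + n ≤ m) : seg τ (i + o) n = seg τ' (j + o) n := by
  rw [seg_eq_seg_iff] at h ⊢
  intro k hk
  simpa [Nat.add_assoc] using h (o + k) (by omega)

theorem seg_isInfix_seg {i o n m : ℕ} (h : o + n ≤ m) : seg τ (i + o) n <:+: seg τ i m := by
  obtain ⟨r, rfl⟩ := Nat.exists_eq_add_of_le h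
  rw [seg_add, seg_add]
  exact ⟨seg τ i o, seg τ (i + (o + n)) r, rfl⟩

theorem seg_isPrefix_seg {i n m : ℕ} (h : n ≤ m) : seg τ i n <+: seg τ i m := by
  obtain ⟨r, rfl⟩ := Nat.exists_eq_add_of_le h
  rw [seg_add]
  exact List.prefix_append _ _

theorem occursAt_seg (i n : ℕ) : OccursAt τ (seg τ i n) i := by
  simp [OccursAt]

theorem occursAt_append {x y : List α} {i : ℕ} :
    OccursAt τ (x ++ y) i ↔ OccursAt τ x i ∧ OccursAt τ y (i + x.length) := by
  unfold OccursAt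
  rw [List.length_append, seg_add]
  exact ⟨fun h => List.append_inj h (by simp), fun ⟨hx, hy⟩ => by rw [hx, hy]⟩

theorem exists_occursAt_of_isInfix_seg {x : List α} {j m : ℕ} (h : x <:+: seg τ j m) :
    ∃ o, o + x.length ≤ m ∧ OccursAt τ x (j + o) := by
  obtain ⟨s, t, hst⟩ := h
  have hocc := occursAt_seg τ j m
  rw [← hst, occursAt_append, occursAt_append] at hocc
  refine ⟨s.length, ?_, hocc.1.2⟩
  have := congrArg List.length hst
  simp only [List.length_append, seg_length] at this
  omega

end Factors

section Languages

variable {α β : Type*}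

def IsFactorial (L : Set (List α)) : Prop :=
  ∀ ⦃x w : List α⦄, w ∈ L → x <:+: w → x ∈ L

def IsUniformlyRecurrent (L : Set (List α)) : Prop :=
  ∀ x ∈ L, ∃ ℓ, ∀ w ∈ L, ℓ ≤ w.length → x <:+: w

variable {L L₁ L₂ : Set (List α)}

theorem IsFactorial.image_map (hL : IsFactorial L) (g : α → β) :
    IsFactorial (List.map g '' L) := by
  rintro x _ ⟨w, hw, rfl⟩ hx
  obtain ⟨y, hy, rfl⟩ := List.infix_map_iff.1 hx
  exact ⟨y, hL hw hy, rfl⟩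

theorem IsUniformlyRecurrent.image_map (hL : IsUniformlyRecurrent L) (g : α → β) :
    IsUniformlyRecurrent (List.map g '' L) := by
  rintro _ ⟨x, hx, rfl⟩
  obtain ⟨ℓ, hℓ⟩ := hL x hx
  refine ⟨ℓ, ?_⟩
  rintro _ ⟨w, hw, rfl⟩ hlen
  exact (hℓ w hw (by simpa using hlen)).map g

theorem IsUniformlyRecurrent.subset_of_forall_exists_mem_inter (h₁ : IsUniformlyRecurrent L₁)
    (h₂ : IsFactorial L₂) (h : ∀ m, ∃ w ∈ L₁ ∩ L₂, m ≤ w.length) : L₁ ⊆ L₂ := by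
  intro v hv
  obtain ⟨ℓ, hℓ⟩ := h₁ v hv
  obtain ⟨w, ⟨hw₁, hw₂⟩, hlen⟩ := h ℓ
  exact h₂ hw₂ (hℓ w hw₁ hlen)

theorem IsChain.sInter_inter_nonempty {γ : Type*} {c : Set (Set γ)} (hc : IsChain (· ⊆ ·) c)
    {T : Set γ} (hT : T.Finite) (hne : c.Nonempty) (h : ∀ s ∈ c, (s ∩ T).Nonempty) :
    (⋂₀ c ∩ T).Nonempty := by
  have hfin : ((· ∩ T) '' c).Finite :=
    hT.finite_subsets.subset (by rintro _ ⟨s, -, rfl⟩; exact Set.inter_subset_right)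
  obtain ⟨_, ⟨s₀, hs₀, rfl⟩, hmin⟩ := hfin.exists_minimal (hne.image _)
  obtain ⟨x, hx₀, hxT⟩ := h s₀ hs₀
  refine ⟨x, fun s hs => ?_, hxT⟩
  rcases hc.total hs₀ hs with hle | hle
  · exact hle hx₀
  · exact (hmin ⟨s, hs, rfl⟩ (Set.inter_subset_inter_left T hle) ⟨hx₀, hxT⟩).1

theorem exists_isUniformlyRecurrent_subset [Finite α] (hfac : IsFactorial L)
    (hlen : ∀ n, ∃ w ∈ L, w.length = n) :
    ∃ L' ⊆ L, IsFactorial L' ∧ (∀ n, ∃ w ∈ L', w.length = n) ∧ IsUniformlyRecurrent L' := by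
  let S : Set (Set (List α)) := {L' | IsFactorial L' ∧ ∀ n, ∃ w ∈ L', w.length = n}
  have hchain : ∀ c ⊆ S, IsChain (· ⊆ ·) c → c.Nonempty → ∃ lb ∈ S, ∀ s ∈ c, lb ⊆ s := by
    refine fun c hcS hc hne => ⟨⋂₀ c, ⟨fun x w hw hxw s hs => (hcS hs).1 (hw s hs) hxw,
      fun n => ?_⟩, fun s => Set.sInter_subset_of_mem⟩
    obtain ⟨w, hw, hwn⟩ := hc.sInter_inter_nonempty (List.finite_length_eq α n) hne
      fun s hs => (hcS hs).2 n
    exact ⟨w, hw, hwn⟩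
  obtain ⟨M, hML, hM⟩ := zorn_superset_nonempty S hchain L ⟨hfac, hlen⟩
  refine ⟨M, hML, hM.1.1, hM.1.2, fun v hv => ?_⟩
  by_contra! hno
  -- the words of `M` avoiding `v` would form a smaller language in `S`
  let A : Set (List α) := {w ∈ M | ¬ v <:+: w}
  have hA : A ∈ S := by
    refine ⟨fun x w hw hxw => ⟨hM.1.1 hw.1 hxw, fun hvx => hw.2 (hvx.trans hxw)⟩, fun n => ?_⟩
    obtain ⟨w, hwM, hwn, hvw⟩ := hno n
    refine ⟨w.take n, ⟨hM.1.1 hwM (List.take_prefix n w).isInfix,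
      fun hv' => hvw (hv'.trans (List.take_prefix n w).isInfix)⟩, by simpa using hwn⟩
  exact ((hM.2 hA fun w hw => hw.1) hv).2 (List.infix_refl v)

theorem exists_eq_of_mem_inter_of_le_length {𝒮 : Set (Set (List α))} (h𝒮 : 𝒮.Finite)
    (hfac : ∀ L ∈ 𝒮, IsFactorial L) (hur : ∀ L ∈ 𝒮, IsUniformlyRecurrent L) :
    ∃ m, ∀ L₁ ∈ 𝒮, ∀ L₂ ∈ 𝒮, ∀ w ∈ L₁ ∩ L₂, m ≤ w.length → L₁ = L₂ := by
  suffices ∀ᶠ m in atTop, ∀ p ∈ 𝒮 ×ˢ 𝒮, ∀ w ∈ p.1 ∩ p.2, m ≤ w.length → p.1 = p.2 by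
    obtain ⟨m, hm⟩ := this.exists
    exact ⟨m, fun L₁ h₁ L₂ h₂ => hm (L₁, L₂) ⟨h₁, h₂⟩⟩
  refine (eventually_all_finite (h𝒮.prod h𝒮)).2 fun ⟨L₁, L₂⟩ ⟨h₁, h₂⟩ => ?_
  by_cases hub : ∀ m, ∃ w ∈ L₁ ∩ L₂, m ≤ w.length
  · refine .of_forall fun _ _ _ _ => ((hur _ h₁).subset_of_forall_exists_mem_inter
      (hfac _ h₂) hub).antisymm ((hur _ h₂).subset_of_forall_exists_mem_inter (hfac _ h₁) ?_)
    simpa only [Set.inter_comm] using hub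
  · push Not at hub
    obtain ⟨m, hm⟩ := hub
    exact eventually_atTop.2 ⟨m, fun m' hm' w hw hlen => absurd (hm w hw) (by omega)⟩

theorem exists_eventually_seg_mem_of_sUnion {τ : ℕ → α} {𝒮 : Set (Set (List α))}
    (h𝒮 : 𝒮.Finite) (hfac : ∀ L ∈ 𝒮, IsFactorial L) (hur : ∀ L ∈ 𝒮, IsUniformlyRecurrent L)
    (h : ∀ n, ∀ᶠ i in atTop, seg τ i n ∈ ⋃₀ 𝒮) :
    ∃ L ∈ 𝒮, ∀ n, ∀ᶠ i in atTop, seg τ i n ∈ L := by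
  obtain ⟨m, hm⟩ := exists_eq_of_mem_inter_of_le_length h𝒮 hfac hur
  obtain ⟨N, hN⟩ := eventually_atTop.1 (h (m + 1))
  obtain ⟨L₀, hL₀, hNL₀⟩ := hN N le_rfl
  -- consecutive windows of length `m + 1` share a word of length `m`
  have hlate : ∀ i ≥ N, seg τ i (m + 1) ∈ L₀ := by
    refine Nat.le_induction hNL₀ fun i hi ih => ?_
    obtain ⟨L, hL, hiL⟩ := hN (i + 1) (by omega)
    have h₀ : seg τ (i + 1) m ∈ L₀ := hfac _ hL₀ ih (seg_isInfix_seg τ (by omega))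
    have h₁ : seg τ (i + 1) m ∈ L := hfac _ hL hiL (seg_isPrefix_seg τ (by omega)).isInfix
    exact hm L hL L₀ hL₀ _ ⟨h₁, h₀⟩ (by simp) ▸ hiL
  refine ⟨L₀, hL₀, fun n => ?_⟩
  filter_upwards [h (n + (m + 1)), eventually_ge_atTop N] with i ⟨L, hL, hiL⟩ hi
  have hpre : seg τ i (m + 1) ∈ L := hfac _ hL hiL (seg_isPrefix_seg τ (by omega)).isInfix
  rw [← hm L hL L₀ hL₀ _ ⟨hpre, hlate i hi⟩ (by simp)]
  exact hfac _ hL hiL (seg_isPrefix_seg τ (by omega)).isInfix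

end Languages

section Recurrence

variable {α : Type*} (τ : ℕ → α)

def recurrentFactors : Set (List α) :=
  {x | {i | OccursAt τ x i}.Infinite}

theorem isFactorial_recurrentFactors : IsFactorial (recurrentFactors τ) := by
  rintro x w hw ⟨s, t, rfl⟩
  refine (hw.image (add_left_injective s.length).injOn).mono ?_
  rintro _ ⟨i, hi, rfl⟩
  exact ((occursAt_append τ).1 ((occursAt_append τ).1 hi).1).2

theorem eventually_seg_mem_recurrentFactors [Finite α] (n : ℕ) :
    ∀ᶠ i in atTop, seg τ i n ∈ recurrentFactors τ := by
  let B : Set (List α) := {x | x.length = n ∧ x ∉ recurrentFactors τ}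
  have hB : B.Finite := (List.finite_length_eq α n).subset fun x hx => hx.1
  have hlate : ∀ᶠ i in atTop, ∀ x ∈ B, ¬ OccursAt τ x i := by
    rw [eventually_all_finite hB, ← Nat.cofinite_eq_atTop]
    exact fun x hx => (Set.not_infinite.1 hx.2).eventually_cofinite_notMem
  filter_upwards [hlate] with i hi
  by_contra hrec
  exact hi _ ⟨seg_length τ i n, hrec⟩ (occursAt_seg τ i n)

theorem ap_of_eventually_seg_mem {L : Set (List α)}
    (hur : IsUniformlyRecurrent L) (h : ∀ n, ∀ᶠ i in atTop, seg τ i n ∈ L) : AP τ := by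
  intro x hx
  obtain ⟨N, hN⟩ := eventually_atTop.1 (h x.length)
  obtain ⟨i, hi, hNi⟩ := hx.exists_gt N
  obtain ⟨ℓ, hℓ⟩ := hur x (hi ▸ hN i hNi.le)
  obtain ⟨M, hM⟩ := eventually_atTop.1 (h ℓ)
  refine ⟨M + ℓ, fun j => ?_⟩
  obtain ⟨o, ho, hocc⟩ :=
    exists_occursAt_of_isInfix_seg τ (hℓ _ (hM (j + M) (by omega)) (by simp))
  exact ⟨j + M + o, by omega, by omega, hocc⟩

end Recurrence

section RunMap

variable {σ q : Type*} (g : q → σ → q)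

def runMap (w : List σ) (s : q) : q :=
  w.foldl g s

theorem runMap_append (u v : List σ) : runMap g (u ++ v) = runMap g v ∘ runMap g u := by
  funext s
  simp [runMap]

def runTrack (ω : ℕ → σ) (e t : ℕ) : σ × (q → q) :=
  (ω (e + t), runMap g (seg ω e t))

theorem seg_runTrack_eq_map {ω : ℕ → σ} {e t t' m : ℕ} {ρ : q → q}
    (hω : seg ω (e + t) m = seg ω (e + t') m)
    (hρ : runMap g (seg ω e t) = runMap g (seg ω e t') ∘ ρ) :
    seg (runTrack g ω e) t m = (seg (runTrack g ω e) t' m).map (Prod.map id (· ∘ ρ)) := by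
  rw [← seg_comp, seg_eq_seg_iff]
  intro k hk
  have hpre : seg ω (e + t) k = seg ω (e + t') k := by
    simpa using seg_eq_seg_of_seg_eq ω hω (o := 0) (n := k) (by omega)
  have hpt : ω (e + (t + k)) = ω (e + (t' + k)) := by
    simpa [Nat.add_assoc] using (seg_eq_seg_iff ω).1 hω k hk
  simp only [runTrack, Function.comp_apply, Prod.map, id, seg_add, runMap_append, hρ, hpre, hpt]
  rfl

end RunMap

def MinimizesRunImage {σ q : Type*} (g : q → σ → q) (ω : ℕ → σ) (w₀ : List σ) : Prop :=
  ∀ w ∈ recurrentFactors ω, (Set.range (runMap g w₀)).ncard ≤ (Set.range (runMap g w)).ncard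

section Synchronization

variable {σ q : Type*} [Finite q] {g : q → σ → q} {ω : ℕ → σ} {w₀ : List σ}

theorem image_runMap_seg_eq_of_mem_recurrentFactors
    (hmin : MinimizesRunImage g ω w₀) {s d : ℕ} (hs : OccursAt ω w₀ s) (hsd : OccursAt ω w₀ (s + d))
    (hrec : seg ω s (d + w₀.length) ∈ recurrentFactors ω) :
    runMap g (seg ω (s + w₀.length) d) '' Set.range (runMap g w₀) =
      Set.range (runMap g w₀) := by
  have h₁ : seg ω s (d + w₀.length) = w₀ ++ seg ω (s + w₀.length) d := by
    rw [Nat.add_comm, seg_add, show seg ω s w₀.length = w₀ from hs]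
  have h₂ : seg ω s (d + w₀.length) = seg ω s d ++ w₀ := by
    rw [seg_add, show seg ω (s + d) w₀.length = w₀ from hsd]
  apply Set.eq_of_subset_of_ncard_le
  · rw [← Set.range_comp, ← runMap_append, ← h₁, h₂, runMap_append]
    exact Set.range_comp_subset_range _ _
  · simpa only [h₁, runMap_append, Set.range_comp] using hmin _ hrec
  · exact Set.toFinite _

theorem image_runMap_seg_eq
    (hmin : MinimizesRunImage g ω w₀) {l s₀ : ℕ}
    (hgap : ∀ j, ∃ i, j ≤ i ∧ i + w₀.length ≤ j + l ∧ OccursAt ω w₀ i)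
    (hrec : ∀ i ≥ s₀, seg ω i (l + 1 + w₀.length) ∈ recurrentFactors ω)
    (hs₀ : OccursAt ω w₀ s₀) (d : ℕ) (hd : OccursAt ω w₀ (s₀ + d)) :
    runMap g (seg ω (s₀ + w₀.length) d) '' Set.range (runMap g w₀) =
      Set.range (runMap g w₀) := by
  have hshort : ∀ d' r, r ≤ l + 1 → OccursAt ω w₀ (s₀ + d') → OccursAt ω w₀ (s₀ + d' + r) →
      runMap g (seg ω (s₀ + d' + w₀.length) r) '' Set.range (runMap g w₀) =
        Set.range (runMap g w₀) := fun d' r hr h₁ h₂ =>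
    image_runMap_seg_eq_of_mem_recurrentFactors hmin h₁ h₂
      (isFactorial_recurrentFactors ω (hrec _ (by omega)) (seg_isPrefix_seg ω (by omega)).isInfix)
  induction d using Nat.strong_induction_on with
  | _ d ih =>
  by_cases hdl : d ≤ l
  · simpa using hshort 0 d (by omega) (by simpa using hs₀) (by simpa using hd)
  -- split at an occurrence of `w₀` ending at most `l + 1` letters before the end
  obtain ⟨i, hi₁, hi₂, hi⟩ := hgap (s₀ + d - (l + 1))
  obtain ⟨d', rfl⟩ : ∃ d', i = s₀ + d' := ⟨i - s₀, by omega⟩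
  obtain ⟨r, rfl⟩ : ∃ r, d = d' + r := ⟨d - d', by omega⟩
  rw [seg_add, runMap_append, Set.image_comp, ih d' (by omega) hi, Nat.add_right_comm]
  exact hshort d' r (by omega) hi (by rwa [← Nat.add_assoc] at hd)

theorem range_runMap_seg_eq
    (hmin : MinimizesRunImage g ω w₀) {l s₀ : ℕ}
    (hgap : ∀ j, ∃ i, j ≤ i ∧ i + w₀.length ≤ j + l ∧ OccursAt ω w₀ i)
    (hrec : ∀ i ≥ s₀, seg ω i (l + 1 + w₀.length) ∈ recurrentFactors ω)
    (hs₀ : OccursAt ω w₀ s₀) {d : ℕ} (hd : OccursAt ω w₀ (s₀ + w₀.length + d)) :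
    Set.range (runMap g (seg ω (s₀ + w₀.length) (d + w₀.length))) = Set.range (runMap g w₀) := by
  refine subset_antisymm ?_ ?_
  · rw [seg_add, show seg ω (s₀ + w₀.length + d) w₀.length = w₀ from hd, runMap_append]
    exact Set.range_comp_subset_range _ _
  · rw [← image_runMap_seg_eq hmin hgap hrec hs₀ (d + w₀.length)
      (by rwa [show s₀ + (d + w₀.length) = s₀ + w₀.length + d by omega])]
    exact Set.image_subset_range _ _

theorem range_runMap_seg_eq_of_seg_eq
    (hmin : MinimizesRunImage g ω w₀) {l s₀ : ℕ}
    (hgap : ∀ j, ∃ i, j ≤ i ∧ i + w₀.length ≤ j + l ∧ OccursAt ω w₀ i)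
    (hrec : ∀ i ≥ s₀, seg ω i (l + 1 + w₀.length) ∈ recurrentFactors ω)
    (hs₀ : OccursAt ω w₀ s₀) {t t' : ℕ}
    (h : seg ω (s₀ + w₀.length + t) l = seg ω (s₀ + w₀.length + t') l) :
    Set.range (runMap g (seg ω (s₀ + w₀.length) (t + l))) =
      Set.range (runMap g (seg ω (s₀ + w₀.length) (t' + l))) := by
  set e := s₀ + w₀.length
  -- an occurrence of `w₀` inside the window resets the image to `range (runMap g w₀)`
  have hsplit : ∀ t o, o + w₀.length ≤ l → OccursAt ω w₀ (e + t + o) →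
      Set.range (runMap g (seg ω e (t + l))) =
        runMap g (seg ω (e + t + (o + w₀.length)) (l - (o + w₀.length))) ''
          Set.range (runMap g w₀) := fun t o hol hocc => by
    rw [show t + l = t + o + w₀.length + (l - (o + w₀.length)) by omega, seg_add, runMap_append,
      Set.range_comp, range_runMap_seg_eq hmin hgap hrec hs₀ (by rwa [Nat.add_assoc] at hocc)]
    congr 3
    omega
  obtain ⟨i, hi₁, hi₂, hi⟩ := hgap (e + t)
  obtain ⟨o, rfl⟩ : ∃ o, i = e + t + o := ⟨i - (e + t), by omega⟩
  have hi' : OccursAt ω w₀ (e + t' + o) :=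
    (seg_eq_seg_of_seg_eq ω h.symm (by omega)).trans hi
  rw [hsplit t o (by omega) hi, hsplit t' o (by omega) hi',
    seg_eq_seg_of_seg_eq ω h (by omega)]

end Synchronization

theorem exists_range_runMap_seg_eq {σ q : Type*} [Finite σ] [Finite q] (g : q → σ → q)
    {ω : ℕ → σ} (hω : AP ω) :
    ∃ e k, ∀ t t', seg ω (e + t) k = seg ω (e + t') k →
      Set.range (runMap g (seg ω e (t + k))) = Set.range (runMap g (seg ω e (t' + k))) := by
  obtain ⟨w₀, hw₀, hmin⟩ := (measure fun w => (Set.range (runMap g w)).ncard).wf.has_min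
    (recurrentFactors ω) ⟨_, (eventually_seg_mem_recurrentFactors ω 0).exists.choose_spec⟩
  obtain ⟨l, hgap⟩ := hω w₀ hw₀
  obtain ⟨N, hN⟩ :=
    eventually_atTop.1 (eventually_seg_mem_recurrentFactors ω (l + 1 + w₀.length))
  obtain ⟨s₀, hs₀, hNs₀⟩ := hw₀.exists_gt N
  exact ⟨s₀ + w₀.length, l, fun t t' h => range_runMap_seg_eq_of_seg_eq
    (fun w hw => not_lt.1 (hmin w hw)) hgap (fun i hi => hN i (by omega)) hs₀ h⟩

section Cover

variable {σ q : Type*} [Finite σ] (g : q → σ → q) {ω : ℕ → σ}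

theorem eventually_exists_seg_runTrack_mem_image (hω : AP ω) {e k : ℕ}
    (hsync : ∀ t t', seg ω (e + t) k = seg ω (e + t') k →
      Set.range (runMap g (seg ω e (t + k))) = Set.range (runMap g (seg ω e (t' + k))))
    {L : Set (List (σ × (q → q)))} (hfac : IsFactorial L)
    (hrec : L ⊆ recurrentFactors (runTrack g ω e)) (hlen : ∀ n, ∃ w ∈ L, w.length = n) (m : ℕ) :
    ∀ᶠ i in atTop, ∃ ρ : q → q,
      seg (runTrack g ω e) i m ∈ List.map (Prod.map id (· ∘ ρ)) '' L := by
  obtain ⟨N, hN⟩ := eventually_atTop.1 (eventually_seg_mem_recurrentFactors ω (k + m))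
  refine eventually_atTop.2 ⟨N + k, fun i hi => ?_⟩
  obtain ⟨t, rfl⟩ : ∃ t, i = t + k := ⟨i - k, by omega⟩
  -- the `ω`-context of the window recurs within the `ω`-trace of a long word of `L`
  obtain ⟨ℓ, hℓ⟩ := hω _ (hN (e + t) (by omega))
  obtain ⟨u, hu, rfl⟩ := hlen ℓ
  obtain ⟨P, hP⟩ := (hrec hu).nonempty
  obtain ⟨j, hj₁, hj₂, hj⟩ := hℓ (e + P)
  obtain ⟨t', rfl⟩ : ∃ t', j = e + t' := ⟨j - e, by omega⟩
  have hW : seg ω (e + t) (k + m) = seg ω (e + t') (k + m) := by simpa using hj.symm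
  obtain ⟨ρ, hρ⟩ := Set.range_subset_range_iff_exists_comp.1
    (hsync t t' (by simpa using seg_eq_seg_of_seg_eq ω hW (o := 0) (n := k) (by omega))).le
  refine ⟨ρ, seg (runTrack g ω e) (t' + k) m, hfac hu ?_, (seg_runTrack_eq_map g ?_ hρ).symm⟩
  · have := seg_isInfix_seg (runTrack g ω e) (i := P) (o := t' + k - P) (n := m)
      (m := u.length) (by simp at hj₂; omega)
    rwa [show P + (t' + k - P) = t' + k by omega, show seg _ P u.length = u from hP] at this
  · simpa [Nat.add_assoc] using seg_eq_seg_of_seg_eq ω hW (o := k) (n := m) le_rfl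

variable [Finite q]

theorem exists_eventually_seg_runTrack_mem (hω : AP ω) :
    ∃ e, ∃ L : Set (List (σ × (q → q))),
      IsUniformlyRecurrent L ∧ ∀ n, ∀ᶠ i in atTop, seg (runTrack g ω e) i n ∈ L := by
  obtain ⟨e, k, hsync⟩ := exists_range_runMap_seg_eq g hω
  obtain ⟨L, hLrec, hfac, hlen, hur⟩ :=
    exists_isUniformlyRecurrent_subset (isFactorial_recurrentFactors (runTrack g ω e))
      fun n => (eventually_seg_mem_recurrentFactors _ n).exists.elim
        fun i hi => ⟨_, hi, seg_length _ _ _⟩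
  let translate (ρ : q → q) := List.map (Prod.map id (· ∘ ρ)) '' L
  obtain ⟨_, ⟨ρ, rfl⟩, hρ⟩ := exists_eventually_seg_mem_of_sUnion (Set.finite_range translate)
    (by rintro _ ⟨ρ, rfl⟩; exact hfac.image_map _) (by rintro _ ⟨ρ, rfl⟩; exact hur.image_map _)
    fun n => (eventually_exists_seg_runTrack_mem_image g hω hsync hfac hLrec hlen n).mono
      fun i ⟨ρ, hρ⟩ => Set.mem_sUnion_of_mem hρ ⟨ρ, rfl⟩
  exact ⟨e, _, hur.image_map _, hρ⟩

end Cover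

theorem autoStates_add {σ δ q : Type*} (f : q → σ → q × δ) (q0 : q) (ω : ℕ → σ) (e t : ℕ) :
    autoStates f q0 ω (e + t) =
      runMap (fun s a => (f s a).1) (seg ω e t) (autoStates f q0 ω e) := by
  induction t with
  | zero => simp [seg, runMap]
  | succ t ih =>
    rw [← Nat.add_assoc, autoStates, ih, seg_add, runMap_append]
    simp [seg, runMap]

theorem ap_autoOutput_general {σ δ q : Type*} [Finite σ] [Finite q]
    (f : q → σ → q × δ) (q0 : q) (ω : ℕ → σ) (h : AP ω) :
    AP (autoOutput f q0 ω) := by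
  obtain ⟨e, L, hur, hL⟩ := exists_eventually_seg_runTrack_mem (fun s a => (f s a).1) h
  let out (p : σ × (q → q)) : δ := (f (p.2 (autoStates f q0 ω e)) p.1).2
  refine ap_of_eventually_seg_mem _ (hur.image_map out) fun n => ?_
  filter_upwards [(tendsto_sub_atTop_nat e).eventually (hL n), eventually_ge_atTop e]
    with i hi hei
  refine ⟨_, hi, ?_⟩
  rw [← seg_comp, seg_eq_seg_iff]
  intro k _
  rw [show i + k = e + (i - e + k) by omega]
  simp only [Function.comp_apply, out, runTrack, autoOutput, autoStates_add]

/-- Finite automata preserve almost periodicity. -/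
theorem ap_autoOutput {σ δ q : Type*} [Finite σ] [Finite δ] [Finite q]
    (f : q → σ → q × δ) (q0 : q) (ω : ℕ → σ) (h : AP ω) :
    AP (autoOutput f q0 ω) :=
  ap_autoOutput_general f q0 ω h
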